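/- arXiv:1611.08870 — 2 statements merged into one kernel-verified Lean document; each statement's English description precedes it below -/
import Mathlib

section
/- Suppose that F is a π-tree on a topological space X and α : ω → ω is a strictly increasing function. Then there exists a π-tree H on X such that α[rise_F(p,U)] ⊆ rise_H(p,U) for all p ∈ X and all neighbourhoods U of p in X. -/
open Set

universe u v

/-- A family `γ` π-refines `δ`: every nonempty member of `δ` contains a
nonempty member of `γ`. -/
def PiRefines {α : Type*} (γ δ : Set (Set α)) : Prop :=
  ∀ D ∈ δ, D.Nonempty → ∃ G ∈ γ, G.Nonempty ∧ G ⊆ D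

/-- The finite intersection property. -/
def HasFIP {α : Type*} (γ : Set (Set α)) : Prop :=
  ∀ δ : Set (Set α), δ ⊆ γ → δ.Finite → δ.Nonempty → (⋂₀ δ).Nonempty

/-- `cofin A` is the family of complements in `A` of finite subsets of `A`. -/
def cofin (A : Set ℕ) : Set (Set ℕ) :=
  {B | ∃ C : Set ℕ, C.Finite ∧ C ⊆ A ∧ B = A \ C}

/-- A foliage tree on `X`: a set-theoretic tree (strict partial order with
well-ordered sets of strict predecessors) with a leaf (a subset of `X`)
attached to each node. -/
structure FoliageTree (X : Type u) where
  Node : Type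
  lt : Node → Node → Prop
  lt_irrefl : ∀ a, ¬ lt a a
  lt_trans : ∀ {a b c}, lt a b → lt b c → lt a c
  wellOrdered : ∀ a : Node, IsWellOrder {b : Node // lt b a} fun x y => lt x.1 y.1
  leaf : Node → Set X

/-- Strict proper-extension order on finite sequences of naturals. -/
def seqLT (a b : List ℕ) : Prop := a <+: b ∧ a ≠ b

namespace FoliageTree

variable {X : Type u}

/-- The sons (immediate successors) of a node. -/
def Sons (F : FoliageTree X) (x : F.Node) : Set F.Node :=
  {s | F.lt x s ∧ ¬ ∃ t, F.lt x t ∧ F.lt t s}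

/-- A node is maximal if it has no strict successor. -/
def IsMaxNode (F : FoliageTree X) (x : F.Node) : Prop := ¬ ∃ s, F.lt x s

/-- A chain of nodes. -/
def IsChainN (F : FoliageTree X) (C : Set F.Node) : Prop :=
  ∀ x ∈ C, ∀ y ∈ C, F.lt x y ∨ x = y ∨ F.lt y x

/-- A branch is a maximal chain. -/
def IsBranch (F : FoliageTree X) (B : Set F.Node) : Prop :=
  F.IsChainN B ∧ ∀ C, F.IsChainN C → B ⊆ C → B = C

/-- The height of a node: the order type of its set of strict predecessors. -/
noncomputable def height (F : FoliageTree X) (v : F.Node) : Ordinal :=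
  @Ordinal.type {b : F.Node // F.lt b v} (fun x y => F.lt x.1 y.1) (F.wellOrdered v)

/-- `shoot F v`: unions of leaves over cofinite sets of sons of `v`. -/
def shoot (F : FoliageTree X) (v : F.Node) : Set (Set X) :=
  {S | ∃ C : Set F.Node, C ⊆ F.Sons v ∧ (F.Sons v \ C).Finite ∧ S = ⋃ s ∈ C, F.leaf s}

/-- `scope F p`: the nodes whose leaf contains `p`. -/
def scope (F : FoliageTree X) (p : X) : Set F.Node := {x | p ∈ F.leaf x}

/-- The union of all leaves. -/
def flesh (F : FoliageTree X) : Set X := ⋃ x, F.leaf x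

/-- `F` is a foliage `ω,ω`-tree: its skeleton is order-isomorphic to
`(ω^{<ω}, ⊂)`. -/
def IsOmegaOmegaTree (F : FoliageTree X) : Prop := Nonempty (F.lt ≃r seqLT)

/-- `F` is locally strict: the leaf of every non-maximal node is the disjoint
union of the leaves of its sons. -/
def LocallyStrict (F : FoliageTree X) : Prop :=
  ∀ x, ¬ F.IsMaxNode x →
    F.leaf x = (⋃ s ∈ F.Sons x, F.leaf s) ∧
      ∀ s ∈ F.Sons x, ∀ t ∈ F.Sons x, s ≠ t → Disjoint (F.leaf s) (F.leaf t)

/-- `F` has strict branches: it has nodes, and along every branch the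
intersection of the leaves is a singleton. -/
def StrictBranches (F : FoliageTree X) : Prop :=
  Nonempty F.Node ∧ ∀ B, F.IsBranch B → ∃ p, (⋂ x ∈ B, F.leaf x) = {p}

/-- `r` is the root: the least node. -/
def IsRoot (F : FoliageTree X) (r : F.Node) : Prop := ∀ x, r = x ∨ F.lt r x

/-- All leaves are open. -/
def OpenIn [TopologicalSpace X] (F : FoliageTree X) : Prop := ∀ x, IsOpen (F.leaf x)

/-- `F` is a Baire foliage tree on `X`. -/
def IsBaireFoliageTree [TopologicalSpace X] (F : FoliageTree X) : Prop :=
  F.OpenIn ∧ F.LocallyStrict ∧ F.IsOmegaOmegaTree ∧ F.StrictBranches ∧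
    ∃ r, F.IsRoot r ∧ F.leaf r = Set.univ

/-- `F` grows into `X`. -/
def GrowsInto [TopologicalSpace X] (F : FoliageTree X) : Prop :=
  ∀ p : X, ∀ U ∈ nhds p, ∃ z ∈ F.scope p, PiRefines (F.shoot z) {U}

/-- `F` is a π-tree on `X`. -/
def IsPiTree [TopologicalSpace X] (F : FoliageTree X) : Prop :=
  F.IsBaireFoliageTree ∧ F.GrowsInto

/-- `rise F p U`: the set of (finite) heights of nodes `v` whose leaf contains
`p` and whose shoot π-refines `{U}`. -/
noncomputable def rise (F : FoliageTree X) (p : X) (U : Set X) : Set ℕ :=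
  {n | ∃ v ∈ F.scope p, PiRefines (F.shoot v) {U} ∧ F.height v = (n : Ordinal)}

/-- `Rise F`: all sets `rise F p U` for `p ∈ X` and `U` a neighbourhood of `p`. -/
def Rise [TopologicalSpace X] (F : FoliageTree X) : Set (Set ℕ) :=
  {R | ∃ p U, U ∈ nhds p ∧ R = F.rise p U}

end FoliageTree

/-!
Identify the tree of `F` with `(ω^{<ω}, ⊂)`, so that `F` is given by its leaves `L w`, and choose
block lengths `m n ≥ 1` whose partial sums `A n = m 0 + ⋯ + m (n - 1)` satisfy
`A n ≤ α n < A (n + 1)`. The new tree `H` again lives on finite sequences, now read as consecutive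
blocks of lengths `m 0, m 1, …`. Since `ℕ ≅ ℕ ^ m n`, a completed `n`-th block codes one son of a
node of height `n` of `F`, so the passage from such a node to its sons is spread over the `m n`
levels from `A n` to `A (n + 1)`: a node of `H` whose last block `g` is still incomplete carries the
union of the leaves of those sons whose code begins with `g`. Then `H` is again a π-tree, each node
of height `n` of `F` reappears in `H` at height `A n` with the same leaf, and the shoots of its
descendants of height `< A (n + 1)` still π-refine `{U}` whenever its own shoot does, because
each of them is a union over cofinitely many codes. Height `α n` lies in that range.
-/

namespace Nat

def unpairList : ℕ → ℕ → List ℕ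
  | 0, _ => []
  | 1, j => [j]
  | d + 2, j => j.unpair.1 :: unpairList (d + 1) j.unpair.2

def pairList : List ℕ → ℕ
  | [] => 0
  | [j] => j
  | a :: b :: r => pair a (pairList (b :: r))

@[simp] lemma length_unpairList : ∀ d j, (unpairList d j).length = d
  | 0, _ => rfl
  | 1, _ => rfl
  | d + 2, j => by simp [unpairList, length_unpairList (d + 1)]

lemma unpairList_pairList : ∀ l : List ℕ, unpairList l.length (pairList l) = l
  | [] => rfl
  | [_] => rfl
  | a :: b :: r => by
    have ih := unpairList_pairList (b :: r)
    simp only [List.length_cons] at ih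
    simp only [List.length_cons, pairList, unpairList, unpair_pair, ih]

lemma pairList_unpairList : ∀ {d : ℕ}, d ≠ 0 → ∀ j, pairList (unpairList d j) = j
  | 1, _, _ => rfl
  | d + 2, _, j => by
    have ih := pairList_unpairList (d := d + 1) (by omega) j.unpair.2
    obtain ⟨b, r, hbr⟩ := List.exists_cons_of_ne_nil
      (List.ne_nil_of_length_pos (by simp : 0 < (unpairList (d + 1) j.unpair.2).length))
    simp only [unpairList, hbr, pairList] at ih ⊢
    rw [ih, pair_unpair]

end Nat

lemma seqLT.length_lt {a b : List ℕ} (h : seqLT a b) : a.length < b.length :=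
  lt_of_le_of_ne h.1.length_le fun he => h.2 (h.1.eq_of_length he)

lemma seqLT.trans {a b c : List ℕ} (hab : seqLT a b) (hbc : seqLT b c) : seqLT a c :=
  ⟨hab.1.trans hbc.1, fun he => by
    have := hab.length_lt.trans hbc.length_lt
    rw [he] at this
    exact lt_irrefl _ this⟩

lemma seqLT_concat (t : List ℕ) (i : ℕ) : seqLT t (t ++ [i]) :=
  ⟨List.prefix_append t [i], fun h => by simpa using congrArg List.length h⟩

lemma seqLT_or_eq_of_prefix {a b : List ℕ} (h : a <+: b) : seqLT a b ∨ a = b := by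
  by_cases he : a = b
  · exact Or.inr he
  · exact Or.inl ⟨h, he⟩

lemma seqLT_trichotomous_of_prefix {a b c : List ℕ} (ha : a <+: c) (hb : b <+: c) :
    seqLT a b ∨ a = b ∨ seqLT b a := by
  rcases List.prefix_or_prefix_of_prefix ha hb with h | h
  · rcases seqLT_or_eq_of_prefix h with h | h
    · exact Or.inl h
    · exact Or.inr (Or.inl h)
  · rcases seqLT_or_eq_of_prefix h with h | h
    · exact Or.inr (Or.inr h)
    · exact Or.inr (Or.inl h.symm)

lemma seqLT_iff_length_lt_of_prefix {a b c : List ℕ} (ha : a <+: c) (hb : b <+: c) :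
    seqLT a b ↔ a.length < b.length := by
  refine ⟨seqLT.length_lt, fun hlt => ?_⟩
  rcases seqLT_trichotomous_of_prefix ha hb with h | rfl | h
  · exact h
  · exact absurd hlt (lt_irrefl _)
  · exact absurd h.length_lt (not_lt.2 hlt.le)

lemma PiRefines.mono_left {α : Type*} {γ γ' δ : Set (Set α)} (h : γ ⊆ γ')
    (hγ : PiRefines γ δ) : PiRefines γ' δ := fun D hD hDne =>
  let ⟨G, hG, hGne, hGD⟩ := hγ D hD hDne
  ⟨G, h hG, hGne, hGD⟩

lemma List.eq_of_prefix_of_length_eq {α : Type*} {a b c : List α} (ha : a <+: c) (hb : b <+: c)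
    (h : a.length = b.length) : a = b := by
  rw [List.prefix_iff_eq_take.1 ha, List.prefix_iff_eq_take.1 hb, h]

lemma List.exists_concat_prefix_of_prefix {α : Type*} {u w : List α} (h : u <+: w)
    (hlt : u.length < w.length) : ∃ a, u ++ [a] <+: w := by
  refine ⟨w[u.length], ?_⟩
  have hu : u = w.take u.length := List.prefix_iff_eq_take.1 h
  calc u ++ [w[u.length]] = w.take (u.length + 1) := by
        rw [List.take_succ_eq_append_getElem hlt, ← hu]
    _ <+: w := List.take_prefix _ _

lemma finite_compl_setOf_forall_concat_prefix {J : Set ℕ} (hJ : Jᶜ.Finite) (c : ℕ → List ℕ)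
    (g : List ℕ) : {i | ∀ j, g ++ [i] <+: c j → j ∈ J}ᶜ.Finite := by
  refine (hJ.image fun j => (c j)[g.length]?.getD 0).subset fun i hi => ?_
  simp only [Set.mem_compl_iff, Set.mem_ofPred_eq, not_forall] at hi
  obtain ⟨j, ⟨s, hs⟩, hj⟩ := hi
  exact ⟨j, hj, by simp [← hs]⟩

namespace FoliageTree

variable {X : Type u}

lemma IsBranch.mem_of_forall_comparable {F : FoliageTree X} {B : Set F.Node}
    (hB : F.IsBranch B) {u : F.Node} (hu : ∀ c ∈ B, F.lt u c ∨ u = c ∨ F.lt c u) : u ∈ B := by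
  have hchain : F.IsChainN (insert u B) := by
    rintro x (rfl | hx) y (rfl | hy)
    · exact Or.inr (Or.inl rfl)
    · exact hu y hy
    · rcases hu x hx with h | h | h
      · exact Or.inr (Or.inr h)
      · exact Or.inr (Or.inl h.symm)
      · exact Or.inl h
    · exact hB.1 x hx y hy
  rw [hB.2 _ hchain (Set.subset_insert u B)]
  exact Set.mem_insert u B

-- reducible, so that the nodes of `listTree L` are lists to the elaborator
abbrev listTree (L : List ℕ → Set X) : FoliageTree X where
  Node := List ℕ
  lt := seqLT
  lt_irrefl _ h := h.2 rfl
  lt_trans := seqLT.trans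
  wellOrdered a :=
    { trichotomous := by
        rintro ⟨x, hx⟩ ⟨y, hy⟩ hxy hyx
        rcases seqLT_trichotomous_of_prefix hx.1 hy.1 with h | h | h
        · exact absurd h hxy
        · exact Subtype.ext h
        · exact absurd h hyx
      wf := Subrelation.wf (fun h => seqLT.length_lt h)
        (InvImage.wf (fun x : {b // seqLT b a} => x.1.length) wellFounded_lt) }
  leaf := L

variable {L : List ℕ → Set X}

lemma mem_listTree_sons {t s : List ℕ} : s ∈ (listTree L).Sons t ↔ ∃ i, s = t ++ [i] := by
  constructor
  · rintro ⟨hts, hmin⟩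
    obtain ⟨_ | ⟨i, _ | ⟨b, r⟩⟩, rfl⟩ := hts.1
    · exact absurd (List.append_nil t).symm hts.2
    · exact ⟨i, rfl⟩
    · refine absurd ⟨t ++ [i], seqLT_concat t i, ⟨b :: r, by simp⟩, fun h => ?_⟩ hmin
      simpa using congrArg List.length h
  · rintro ⟨i, rfl⟩
    refine ⟨seqLT_concat t i, fun ⟨u, h1, h2⟩ => ?_⟩
    have h1 := h1.length_lt
    have h2 := h2.length_lt
    simp only [List.length_append, List.length_singleton] at h2
    omega

lemma iUnion_listTree_sons (t : List ℕ) :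
    ⋃ s ∈ (listTree L).Sons t, (listTree L).leaf s = ⋃ i, L (t ++ [i]) := by
  ext p
  simp only [Set.mem_iUnion, exists_prop]
  constructor
  · rintro ⟨s, hs, hp⟩
    obtain ⟨i, rfl⟩ := mem_listTree_sons.1 hs
    exact ⟨i, hp⟩
  · rintro ⟨i, hp⟩
    exact ⟨t ++ [i], mem_listTree_sons.2 ⟨i, rfl⟩, hp⟩

lemma listTree_height (t : List ℕ) : (listTree L).height t = t.length := by
  let iso : (fun x y : {b // seqLT b t} => seqLT x.1 y.1) ≃r
      ((· < ·) : Fin t.length → Fin t.length → Prop) :=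
    { toFun := fun u => ⟨u.1.length, u.2.length_lt⟩
      invFun := fun i => ⟨t.take i, List.take_prefix _ _, fun h => by
        have := congrArg List.length h
        simp at this
        omega⟩
      left_inv := fun u => Subtype.ext (List.prefix_iff_eq_take.1 u.2.1).symm
      right_inv := fun i => Fin.ext (by simp)
      map_rel_iff' := fun {u w} => (seqLT_iff_length_lt_of_prefix u.2.1 w.2.1).symm }
  have : (listTree L).height t = @Ordinal.type (Fin t.length) (· < ·) _ :=
    (@Ordinal.type_eq _ _ _ _ ((listTree L).wellOrdered t) _).2 ⟨iso⟩
  rw [this, Ordinal.type_fin]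

lemma mem_listTree_shoot {t : List ℕ} {S : Set X} :
    S ∈ (listTree L).shoot t ↔ ∃ J : Set ℕ, Jᶜ.Finite ∧ S = ⋃ j ∈ J, L (t ++ [j]) := by
  let f : ℕ → (listTree L).Node := fun j => t ++ [j]
  have hinj : Function.Injective f := fun a b h => by simpa using List.append_cancel_left h
  have hsons : (listTree L).Sons t = Set.range f := by
    ext s
    exact mem_listTree_sons.trans (exists_congr fun i => eq_comm)
  constructor
  · rintro ⟨C, hCsons, hCfin, rfl⟩
    refine ⟨f ⁻¹' C, ?_, ?_⟩
    · rw [← Set.preimage_compl]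
      refine (hCfin.preimage hinj.injOn).subset fun j hj => ⟨?_, hj⟩
      rw [hsons]
      exact Set.mem_range_self j
    · have hC : C ⊆ Set.range f := hsons ▸ hCsons
      conv_lhs => rw [← Set.image_preimage_eq_of_subset hC, Set.biUnion_image]
  · rintro ⟨J, hJ, rfl⟩
    refine ⟨f '' J, hsons ▸ Set.image_subset_range f J, ?_, ?_⟩
    · rw [hsons, Set.range_sdiff_image hinj]
      exact hJ.image f
    · rw [Set.biUnion_image]

lemma isBranch_listTree_range {f : ℕ → List ℕ} (hlen : ∀ k, (f k).length = k)
    (hf : ∀ k, f k <+: f (k + 1)) : (listTree L).IsBranch (Set.range f) := by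
  have hmono : ∀ {a b}, a ≤ b → f a <+: f b := fun h => Nat.rel_of_forall_rel_succ_of_le _ hf h
  refine ⟨?_, fun C hC hfC => Set.Subset.antisymm hfC fun c hc => ?_⟩
  · rintro _ ⟨a, rfl⟩ _ ⟨b, rfl⟩
    exact seqLT_trichotomous_of_prefix (hmono (le_max_left a b)) (hmono (le_max_right a b))
  · have hnext := hlen (c.length + 1)
    rcases hC c hc _ (hfC ⟨c.length + 1, rfl⟩) with h | h | h
    · refine ⟨c.length, List.eq_of_prefix_of_length_eq (hmono (Nat.le_succ _)) h.1 ?_⟩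
      rw [hlen]
    · have := congrArg List.length h
      omega
    · have := h.length_lt
      omega

lemma IsBranch.mem_of_prefix_listTree {B : Set (List ℕ)} (hB : (listTree L).IsBranch B)
    {u b : List ℕ} (hb : b ∈ B) (hub : u <+: b) : u ∈ B := by
  refine hB.mem_of_forall_comparable fun c hc => ?_
  rcases hB.1 b hb c hc with h | rfl | h
  · exact (seqLT_or_eq_of_prefix (hub.trans h.1)).elim Or.inl (Or.inr ∘ Or.inl)
  · exact (seqLT_or_eq_of_prefix hub).elim Or.inl (Or.inr ∘ Or.inl)
  · exact seqLT_trichotomous_of_prefix hub h.1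

lemma IsBranch.exists_mem_length_eq_listTree {B : Set (List ℕ)}
    (hB : (listTree L).IsBranch B) (k : ℕ) : ∃ b ∈ B, b.length = k := by
  induction k with
  | zero =>
    refine ⟨[], hB.mem_of_forall_comparable fun c _ => ?_, rfl⟩
    exact (seqLT_or_eq_of_prefix (List.nil_prefix (l := c))).elim Or.inl (Or.inr ∘ Or.inl)
  | succ k ih =>
    obtain ⟨b, hb, rfl⟩ := ih
    obtain ⟨c, hc, hlt⟩ : ∃ c ∈ B, b.length < c.length := by
      by_contra! hle
      have hb0 : b ++ [0] ∈ B := hB.mem_of_forall_comparable fun c hc => by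
        rcases hB.1 c hc b hb with h | rfl | h
        · exact Or.inr (Or.inr (h.trans (seqLT_concat b 0)))
        · exact Or.inr (Or.inr (seqLT_concat c 0))
        · exact absurd h.length_lt (not_lt.2 (hle c hc))
      simpa using hle _ hb0
    exact ⟨c.take (b.length + 1), hB.mem_of_prefix_listTree hc (List.take_prefix _ _),
      by simp; omega⟩

lemma IsBranch.eq_of_length_eq_listTree {B : Set (List ℕ)} (hB : (listTree L).IsBranch B)
    {b c : List ℕ} (hb : b ∈ B) (hc : c ∈ B) (h : b.length = c.length) : b = c := by
  rcases hB.1 b hb c hc with h' | h' | h'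
  · exact absurd h'.length_lt h.not_lt
  · exact h'
  · exact absurd h'.length_lt h.symm.not_lt

lemma IsBranch.exists_eq_range_listTree {B : Set (List ℕ)} (hB : (listTree L).IsBranch B) :
    ∃ f : ℕ → List ℕ, (∀ k, (f k).length = k) ∧ (∀ k, f k <+: f (k + 1)) ∧ B = Set.range f := by
  choose f hfB hlen using hB.exists_mem_length_eq_listTree
  refine ⟨f, hlen, fun k => ?_, ?_⟩
  · rcases hB.1 _ (hfB k) _ (hfB (k + 1)) with h | h | h
    · exact h.1
    · have := congrArg List.length h
      simp only [hlen] at this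
      omega
    · have := h.length_lt
      simp only [hlen] at this
      omega
  · ext b
    refine ⟨fun hb => ⟨b.length, hB.eq_of_length_eq_listTree (hfB _) hb (hlen _)⟩, ?_⟩
    rintro ⟨k, rfl⟩
    exact hfB k

section RelIso

variable {F G : FoliageTree X} (e : F.lt ≃r G.lt)

lemma mem_sons_iff_of_relIso {x s : F.Node} : s ∈ F.Sons x ↔ e s ∈ G.Sons (e x) :=
  and_congr e.map_rel_iff.symm (not_congr
    ⟨fun ⟨t, h1, h2⟩ => ⟨e t, e.map_rel_iff.2 h1, e.map_rel_iff.2 h2⟩,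
      fun ⟨t, h1, h2⟩ => ⟨e.symm t, e.rel_symm_apply.2 h1, e.symm_apply_rel.2 h2⟩⟩)

lemma height_eq_of_relIso (x : F.Node) : F.height x = G.height (e x) := by
  let iso : (fun a b : {b // F.lt b x} => F.lt a.1 b.1) ≃r
      (fun a b : {b // G.lt b (e x)} => G.lt a.1 b.1) :=
    { toFun := fun a => ⟨e a.1, e.map_rel_iff.2 a.2⟩
      invFun := fun b => ⟨e.symm b.1, e.symm_apply_rel.2 b.2⟩
      left_inv := fun a => Subtype.ext (e.symm_apply_apply a.1)
      right_inv := fun b => Subtype.ext (e.apply_symm_apply b.1)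
      map_rel_iff' := e.map_rel_iff }
  exact (@Ordinal.type_eq _ _ _ _ (F.wellOrdered x) (G.wellOrdered (e x))).2 ⟨iso⟩

lemma IsChainN.image_relIso {C : Set F.Node} (hC : F.IsChainN C) : G.IsChainN (e '' C) := by
  rintro _ ⟨x, hx, rfl⟩ _ ⟨y, hy, rfl⟩
  rcases hC x hx y hy with h | rfl | h
  · exact Or.inl (e.map_rel_iff.2 h)
  · exact Or.inr (Or.inl rfl)
  · exact Or.inr (Or.inr (e.map_rel_iff.2 h))

lemma IsBranch.image_relIso {B : Set F.Node} (hB : F.IsBranch B) : G.IsBranch (e '' B) := by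
  refine ⟨hB.1.image_relIso e, fun C hC hBC => ?_⟩
  have hB' : B = e.symm '' C := hB.2 _ (hC.image_relIso e.symm) fun x hx =>
    ⟨e x, hBC ⟨x, hx, rfl⟩, e.symm_apply_apply x⟩
  rw [hB', Set.image_image]
  simp

variable {e}

lemma shoot_subset_of_relIso (hleaf : ∀ x, G.leaf (e x) = F.leaf x) (x : F.Node) :
    F.shoot x ⊆ G.shoot (e x) := by
  rintro S ⟨C, hCsons, hCfin, rfl⟩
  refine ⟨e '' C, ?_, (hCfin.image e).subset ?_, ?_⟩
  · rintro _ ⟨s, hs, rfl⟩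
    exact (mem_sons_iff_of_relIso e).1 (hCsons hs)
  · rintro s ⟨hs, hsC⟩
    refine ⟨e.symm s, ⟨(mem_sons_iff_of_relIso e).2 (by simpa using hs), fun h => hsC ?_⟩, by simp⟩
    exact ⟨_, h, by simp⟩
  · simp only [Set.biUnion_image, hleaf]

lemma rise_subset_of_relIso (hleaf : ∀ x, G.leaf (e x) = F.leaf x) (p : X) (U : Set X) :
    F.rise p U ⊆ G.rise p U := by
  rintro n ⟨v, hv, hsh, hh⟩
  refine ⟨e v, ?_, hsh.mono_left (shoot_subset_of_relIso hleaf v), ?_⟩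
  · rw [scope, Set.mem_ofPred_eq, hleaf]
    exact hv
  · rw [← height_eq_of_relIso, hh]

lemma growsInto_of_relIso [TopologicalSpace X] (hleaf : ∀ x, G.leaf (e x) = F.leaf x)
    (hF : F.GrowsInto) : G.GrowsInto := by
  intro p U hU
  obtain ⟨z, hz, hsh⟩ := hF p U hU
  refine ⟨e z, ?_, hsh.mono_left (shoot_subset_of_relIso hleaf z)⟩
  rw [scope, Set.mem_ofPred_eq, hleaf]
  exact hz

end RelIso

end FoliageTree

open FoliageTree

section BaireScheme

variable {X : Type u}

/-- The leaves of a Baire foliage tree on `(ω^{<ω}, ⊂)`, its branches given as sequences. -/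
structure IsBaireScheme [TopologicalSpace X] (L : List ℕ → Set X) : Prop where
  isOpen : ∀ w, IsOpen (L w)
  eq_iUnion : ∀ w, L w = ⋃ j, L (w ++ [j])
  disjoint : ∀ w {j j'}, j ≠ j' → Disjoint (L (w ++ [j])) (L (w ++ [j']))
  nil : L [] = Set.univ
  iInter_eq_singleton : ∀ f : ℕ → List ℕ, (∀ k, (f k).length = k) →
    (∀ k, f k <+: f (k + 1)) → ∃ q, ⋂ k, L (f k) = {q}

lemma leaf_subset_of_prefix {L : List ℕ → Set X} (hL : ∀ w, L w = ⋃ j, L (w ++ [j]))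
    {u w : List ℕ} (huw : u <+: w) : L w ⊆ L u := by
  obtain ⟨s, rfl⟩ := huw
  induction s using List.reverseRecOn with
  | nil => simp
  | append_singleton s i ih =>
    rw [← List.append_assoc]
    exact ((Set.subset_iUnion (fun j => L (u ++ s ++ [j])) i).trans_eq (hL _).symm).trans ih

namespace IsBaireScheme

variable [TopologicalSpace X] {L : List ℕ → Set X}

lemma nonempty (hL : IsBaireScheme L) (w : List ℕ) : (L w).Nonempty := by
  let f : ℕ → List ℕ := fun k => (List.range k).map (w.getD · 0)
  have hfw : f w.length = w := List.ext_getElem (by simp [f]) fun i _ hw => by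
    simp [f, List.getElem?_eq_getElem hw]
  obtain ⟨q, hq⟩ := hL.iInter_eq_singleton f (by simp [f]) fun k => by
    simp only [f, List.range_succ, List.map_append]
    exact List.prefix_append _ _
  refine ⟨q, ?_⟩
  rw [← hfw]
  exact Set.iInter_subset (fun k => L (f k)) w.length (hq ▸ rfl)

lemma isBaireFoliageTree (hL : IsBaireScheme L) : (listTree L).IsBaireFoliageTree := by
  refine ⟨hL.isOpen, fun t _ => ⟨?_, ?_⟩, ⟨RelIso.refl seqLT⟩, ⟨⟨[]⟩, fun B hB => ?_⟩,
    ⟨[], fun t => ?_, hL.nil⟩⟩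
  · rw [iUnion_listTree_sons]
    exact hL.eq_iUnion t
  · intro s hs s' hs' hne
    obtain ⟨i, rfl⟩ := mem_listTree_sons.1 hs
    obtain ⟨i', rfl⟩ := mem_listTree_sons.1 hs'
    exact hL.disjoint t fun h => hne (by rw [h])
  · obtain ⟨f, hlen, hf, rfl⟩ := hB.exists_eq_range_listTree
    rw [Set.biInter_range]
    exact hL.iInter_eq_singleton f hlen hf
  · exact (seqLT_or_eq_of_prefix (List.nil_prefix (l := t))).elim Or.inr Or.inl

lemma of_isBaireFoliageTree {F : FoliageTree X} (e : F.lt ≃r seqLT)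
    (hF : F.IsBaireFoliageTree) : IsBaireScheme fun w => F.leaf (e.symm w) := by
  obtain ⟨hopen, hstrict, -, hbranch, r, hroot, hr⟩ := hF
  let e' : F.lt ≃r (listTree fun w => F.leaf (e.symm w)).lt := e
  have hsons : ∀ w s, s ∈ F.Sons (e.symm w) ↔ ∃ i, s = e.symm (w ++ [i]) := fun w s => by
    rw [mem_sons_iff_of_relIso e', mem_listTree_sons]
    simp [e', RelIso.eq_symm_apply]
  have hnotmax : ∀ w, ¬ F.IsMaxNode (e.symm w) := fun w h =>
    h ⟨e.symm (w ++ [0]), e.symm.map_rel_iff.2 (seqLT_concat w 0)⟩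
  refine ⟨fun w => hopen _, fun w => ?_, fun w j j' hjj' => ?_, ?_, fun f hlen hf => ?_⟩
  · rw [(hstrict _ (hnotmax w)).1]
    ext p
    simp only [Set.mem_iUnion, exists_prop, hsons]
    exact ⟨fun ⟨_, ⟨i, rfl⟩, hp⟩ => ⟨i, hp⟩, fun ⟨i, hp⟩ => ⟨_, ⟨i, rfl⟩, hp⟩⟩
  · refine (hstrict _ (hnotmax w)).2 _ ((hsons _ _).2 ⟨j, rfl⟩) _ ((hsons _ _).2 ⟨j', rfl⟩)
      fun h => hjj' ?_
    simpa using e.symm.injective h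
  · rcases hroot (e.symm []) with rfl | h
    · exact hr
    · exact absurd (e.rel_symm_apply.1 h).length_lt (Nat.not_lt_zero _)
  · obtain ⟨q, hq⟩ := hbranch.2 _ ((isBranch_listTree_range hlen hf).image_relIso e'.symm)
    refine ⟨q, ?_⟩
    rw [← hq, Set.biInter_image, Set.biInter_range]

end IsBaireScheme

end BaireScheme

namespace BlockCode

variable (m : ℕ → ℕ)

def step (s : List ℕ × List ℕ) (i : ℕ) : List ℕ × List ℕ :=
  if s.2.length + 1 = m s.1.length then (s.1 ++ [Nat.pairList (s.2 ++ [i])], [])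
  else (s.1, s.2 ++ [i])

/-- Reads `t` as consecutive blocks of lengths `m 0, m 1, …`: the first component holds the codes
`Nat.pairList` of the completed blocks, the second the incomplete last block. -/
def decode (t : List ℕ) : List ℕ × List ℕ := t.foldl (step m) ([], [])

def blockStart (n : ℕ) : ℕ := ∑ i ∈ Finset.range n, m i

variable {m}

lemma blockStart_succ (n : ℕ) : blockStart m (n + 1) = blockStart m n + m n :=
  Finset.sum_range_succ m n

lemma blockStart_strictMono (hm : ∀ n, 0 < m n) : StrictMono (blockStart m) :=
  strictMono_nat_of_lt_succ fun n => by
    rw [blockStart_succ]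
    exact Nat.lt_add_of_pos_right (hm n)

lemma exists_blockStart_le_lt {α : ℕ → ℕ} (hα : StrictMono α) :
    ∃ m : ℕ → ℕ, (∀ n, 0 < m n) ∧ ∀ n, blockStart m n ≤ α n ∧ α n < blockStart m (n + 1) := by
  set β : ℕ → ℕ := fun n => if n = 0 then 0 else α n
  have hβ : ∀ n, β n ≤ α n := fun n => by by_cases hn : n = 0 <;> simp [β, hn]
  have hαβ : ∀ n, β n < α (n + 1) := fun n => (hβ n).trans_lt (hα (Nat.lt_add_one n))
  have hstart : ∀ n, blockStart (fun n => α (n + 1) - β n) n = β n := by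
    intro n
    induction n with
    | zero => rfl
    | succ n ih =>
      rw [blockStart_succ, ih]
      have := hαβ n
      have : β (n + 1) = α (n + 1) := if_neg (Nat.add_one_ne_zero n)
      omega
  refine ⟨fun n => α (n + 1) - β n, fun n => Nat.sub_pos_of_lt (hαβ n), fun n => ?_⟩
  rw [hstart, hstart]
  exact ⟨hβ n, (hα (Nat.lt_add_one n)).trans_eq (if_neg (Nat.add_one_ne_zero n)).symm⟩

lemma decode_append (t s : List ℕ) : decode m (t ++ s) = s.foldl (step m) (decode m t) :=
  List.foldl_append

lemma decode_concat (t : List ℕ) (i : ℕ) : decode m (t ++ [i]) = step m (decode m t) i := by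
  rw [decode_append, List.foldl_cons, List.foldl_nil]

lemma prefix_step_fst (s : List ℕ × List ℕ) (i : ℕ) : s.1 <+: (step m s i).1 := by
  unfold step
  split
  · exact List.prefix_append _ _
  · exact List.prefix_refl _

lemma decode_fst_prefix_of_prefix {t t' : List ℕ} (h : t <+: t') :
    (decode m t).1 <+: (decode m t').1 := by
  obtain ⟨s, rfl⟩ := h
  induction s using List.reverseRecOn with
  | nil => simp
  | append_singleton s i ih =>
    rw [← List.append_assoc, decode_concat]
    exact ih.trans (prefix_step_fst _ i)

lemma decode_snd_length_lt (hm : ∀ n, 0 < m n) (t : List ℕ) :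
    (decode m t).2.length < m (decode m t).1.length := by
  induction t using List.reverseRecOn with
  | nil => exact hm 0
  | append_singleton t i ih =>
    rw [decode_concat]
    unfold step
    split
    · exact hm _
    · simp only [List.length_append, List.length_singleton]
      omega

lemma length_eq_blockStart_add (t : List ℕ) :
    t.length = blockStart m (decode m t).1.length + (decode m t).2.length := by
  induction t using List.reverseRecOn with
  | nil => rfl
  | append_singleton t i ih =>
    rw [decode_concat]
    unfold step
    split
    · simp only [List.length_append, List.length_singleton, List.length_nil, blockStart_succ]
      omega
    · simp only [List.length_append, List.length_singleton]
      omega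

lemma decode_of_length_eq_blockStart (hm : ∀ n, 0 < m n) {t : List ℕ} {n : ℕ}
    (ht : t.length = blockStart m n) :
    (decode m t).1.length = n ∧ (decode m t).2 = [] := by
  have hlen := length_eq_blockStart_add (m := m) t
  have hlt := decode_snd_length_lt hm t
  have hA := blockStart_strictMono hm
  have h₁ : (decode m t).1.length < n + 1 := hA.lt_iff_lt.1 <| by
    rw [blockStart_succ]
    have := hm n
    omega
  have h₂ : n < (decode m t).1.length + 1 := hA.lt_iff_lt.1 <| by
    rw [blockStart_succ]
    omega
  have hn : (decode m t).1.length = n := by omega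
  rw [hn] at hlen
  exact ⟨hn, List.length_eq_zero_iff.1 (by omega)⟩

lemma decode_append_of_length_lt {t s : List ℕ}
    (h : (decode m t).2.length + s.length < m (decode m t).1.length) :
    decode m (t ++ s) = ((decode m t).1, (decode m t).2 ++ s) := by
  rw [decode_append]
  generalize decode m t = d at h
  induction s generalizing d with
  | nil => simp
  | cons i s ih =>
    simp only [List.length_cons] at h
    have h' : (d.2 ++ [i]).length + s.length < m d.1.length := by
      rw [List.length_append, List.length_singleton]
      omega
    rw [List.foldl_cons, step, if_neg (by omega), ih _ h']
    simp

lemma exists_decode_eq (hm : ∀ n, 0 < m n) (v : List ℕ) :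
    ∃ t, decode m t = (v, []) ∧ t.length = blockStart m v.length := by
  induction v using List.reverseRecOn with
  | nil => exact ⟨[], rfl, rfl⟩
  | append_singleton v j ih =>
    obtain ⟨t, ht, htlen⟩ := ih
    have hcode := Nat.length_unpairList (m v.length) j
    obtain ⟨h, x, hx⟩ := (List.eq_nil_or_concat (Nat.unpairList (m v.length) j)).resolve_left
      fun h => (hm v.length).ne' (by simpa [h] using hcode.symm)
    rw [List.concat_eq_append] at hx
    rw [hx, List.length_append, List.length_singleton] at hcode
    have hdec : decode m (t ++ h) = (v, h) := by
      rw [decode_append_of_length_lt] <;> simp [ht]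
      omega
    refine ⟨t ++ h ++ [x], ?_, ?_⟩
    · rw [decode_concat, hdec, step, if_pos hcode, ← hx, Nat.pairList_unpairList (hm _).ne']
    · simp [htlen, blockStart_succ]
      omega

variable {X : Type u} {L : List ℕ → Set X}

variable (m L) in
def regroup (t : List ℕ) : Set X :=
  ⋃ j, ⋃ (_ : (decode m t).2 <+: Nat.unpairList (m (decode m t).1.length) j),
    L ((decode m t).1 ++ [j])

lemma mem_regroup {t : List ℕ} {p : X} :
    p ∈ regroup m L t ↔ ∃ j, (decode m t).2 <+: Nat.unpairList (m (decode m t).1.length) j ∧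
      p ∈ L ((decode m t).1 ++ [j]) := by
  simp [regroup]

lemma regroup_of_decode_snd_eq_nil (hL : ∀ w, L w = ⋃ j, L (w ++ [j])) {t : List ℕ}
    (ht : (decode m t).2 = []) : regroup m L t = L (decode m t).1 := by
  ext p
  simp [mem_regroup, ht, hL (decode m t).1]

lemma mem_regroup_concat (hm : ∀ n, 0 < m n) (hL : ∀ w, L w = ⋃ j, L (w ++ [j]))
    {t : List ℕ} {i : ℕ} {p : X} :
    p ∈ regroup m L (t ++ [i]) ↔ ∃ j, (decode m t).2 ++ [i] <+:
      Nat.unpairList (m (decode m t).1.length) j ∧ p ∈ L ((decode m t).1 ++ [j]) := by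
  rw [mem_regroup, decode_concat]
  obtain ⟨v, g⟩ := decode m t
  unfold step
  split_ifs with hc
  · -- `i` completes the block, which then codes the single son `v ++ [c]`
    set c := Nat.pairList (g ++ [i])
    have hcode : ∀ j, g ++ [i] <+: Nat.unpairList (m v.length) j ↔ j = c := fun j => by
      have hc' : (g ++ [i]).length = m v.length := by simpa using hc
      constructor
      · intro h
        rw [← Nat.pairList_unpairList (hm v.length).ne' j, ← h.eq_of_length (by simpa using hc')]
      · rintro rfl
        rw [← hc', Nat.unpairList_pairList]
    simp only [List.nil_prefix, true_and, hcode, exists_eq_left]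
    rw [hL (v ++ [c]), Set.mem_iUnion]
  · rfl

lemma regroup_eq_iUnion (hm : ∀ n, 0 < m n) (hL : ∀ w, L w = ⋃ j, L (w ++ [j]))
    (t : List ℕ) : regroup m L t = ⋃ i, regroup m L (t ++ [i]) := by
  ext p
  simp only [Set.mem_iUnion, mem_regroup_concat hm hL, mem_regroup]
  constructor
  · rintro ⟨j, hpre, hp⟩
    have hlt := decode_snd_length_lt hm t
    rw [← Nat.length_unpairList (m _) j] at hlt
    obtain ⟨a, ha⟩ := List.exists_concat_prefix_of_prefix hpre hlt
    exact ⟨a, j, ha, hp⟩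
  · rintro ⟨i, j, hpre, hp⟩
    exact ⟨j, (List.prefix_append _ [i]).trans hpre, hp⟩

lemma regroup_disjoint (hm : ∀ n, 0 < m n) (hL : ∀ w, L w = ⋃ j, L (w ++ [j]))
    (hdisj : ∀ w {j j'}, j ≠ j' → Disjoint (L (w ++ [j])) (L (w ++ [j'])))
    (t : List ℕ) {i i' : ℕ} (hii' : i ≠ i') :
    Disjoint (regroup m L (t ++ [i])) (regroup m L (t ++ [i'])) := by
  refine Set.disjoint_left.2 fun p hp hp' => ?_
  obtain ⟨j, hpre, hpj⟩ := (mem_regroup_concat hm hL).1 hp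
  obtain ⟨j', hpre', hpj'⟩ := (mem_regroup_concat hm hL).1 hp'
  obtain rfl : j = j' := by_contra fun hjj' => Set.disjoint_left.1 (hdisj _ hjj') hpj hpj'
  refine hii' (List.append_cancel_left (List.eq_of_prefix_of_length_eq hpre hpre' ?_)
    |> List.singleton_inj.1)
  simp

lemma exists_mem_regroup (hm : ∀ n, 0 < m n) (hL : ∀ w, L w = ⋃ j, L (w ++ [j]))
    {v : List ℕ} {p : X} (hp : p ∈ L v) {k : ℕ} (hk₁ : blockStart m v.length ≤ k)
    (hk₂ : k < blockStart m (v.length + 1)) :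
    ∃ t, t.length = k ∧ (decode m t).1 = v ∧ p ∈ regroup m L t := by
  obtain ⟨j, hj⟩ := Set.mem_iUnion.1 (hL v ▸ hp)
  obtain ⟨t, ht, htlen⟩ := exists_decode_eq hm v
  rw [blockStart_succ] at hk₂
  set g := (Nat.unpairList (m v.length) j).take (k - t.length)
  have hglen : g.length = k - t.length := by simp [g]; omega
  have hdec : decode m (t ++ g) = (v, g) := by
    rw [decode_append_of_length_lt] <;> simp [ht]
    omega
  refine ⟨t ++ g, by simp; omega, by rw [hdec], mem_regroup.2 ?_⟩
  rw [hdec]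
  exact ⟨j, List.take_prefix _ _, hj⟩

variable [TopologicalSpace X]

lemma iInter_regroup_eq_singleton (hm : ∀ n, 0 < m n) (hL : IsBaireScheme L)
    {f : ℕ → List ℕ} (hlen : ∀ k, (f k).length = k) (hf : ∀ k, f k <+: f (k + 1)) :
    ∃ q, ⋂ k, regroup m L (f k) = {q} := by
  have hA := blockStart_strictMono hm
  have hdec : ∀ n, (decode m (f (blockStart m n))).1.length = n ∧
      (decode m (f (blockStart m n))).2 = [] := fun n => decode_of_length_eq_blockStart hm (hlen _)
  obtain ⟨q, hq⟩ := hL.iInter_eq_singleton (fun n => (decode m (f (blockStart m n))).1)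
    (fun n => (hdec n).1) fun n => decode_fst_prefix_of_prefix
      (Nat.rel_of_forall_rel_succ_of_le _ hf (hA.monotone n.le_succ))
  refine ⟨q, ?_⟩
  -- at the block boundaries the leaves along `f` are those along a branch of `listTree L`
  have hanti : Antitone fun k => regroup m L (f k) := antitone_nat_of_succ_le fun k =>
    leaf_subset_of_prefix (regroup_eq_iUnion hm hL.eq_iUnion) (hf k)
  rw [← hanti.iInter_comp_tendsto_atTop hA.tendsto_atTop, ← hq]
  exact Set.iInter_congr fun n => regroup_of_decode_snd_eq_nil hL.eq_iUnion (hdec n).2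

lemma _root_.IsBaireScheme.regroup (hm : ∀ n, 0 < m n) (hL : IsBaireScheme L) :
    IsBaireScheme (regroup m L) where
  isOpen _ := isOpen_iUnion fun _ => isOpen_iUnion fun _ => hL.isOpen _
  eq_iUnion := regroup_eq_iUnion hm hL.eq_iUnion
  disjoint := regroup_disjoint hm hL.eq_iUnion hL.disjoint
  nil := (regroup_of_decode_snd_eq_nil hL.eq_iUnion rfl).trans hL.nil
  iInter_eq_singleton _ := iInter_regroup_eq_singleton hm hL

lemma piRefines_shoot_regroup (hm : ∀ n, 0 < m n) (hL : IsBaireScheme L) {t : List ℕ}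
    {U : Set X} (h : PiRefines ((listTree L).shoot (decode m t).1) {U}) :
    PiRefines ((listTree (regroup m L)).shoot t) {U} := by
  rintro D rfl hDne
  obtain ⟨G, hG, -, hGU⟩ := h D rfl hDne
  obtain ⟨J, hJ, rfl⟩ := mem_listTree_shoot.1 hG
  set I := {i | ∀ j, (decode m t).2 ++ [i] <+: Nat.unpairList (m (decode m t).1.length) j → j ∈ J}
  have hI : Iᶜ.Finite := finite_compl_setOf_forall_concat_prefix hJ _ _
  obtain ⟨i, hi⟩ := (compl_compl I ▸ hI.infinite_compl).nonempty
  refine ⟨⋃ i ∈ I, regroup m L (t ++ [i]), mem_listTree_shoot.2 ⟨I, hI, rfl⟩, ?_, ?_⟩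
  · obtain ⟨p, hp⟩ := (hL.regroup hm).nonempty (t ++ [i])
    exact ⟨p, Set.mem_biUnion hi hp⟩
  · refine Set.iUnion₂_subset fun i hi p hp => hGU ?_
    obtain ⟨j, hpre, hpj⟩ := (mem_regroup_concat hm hL.eq_iUnion).1 hp
    exact Set.mem_biUnion (hi j hpre) hpj

lemma rise_regroup (hm : ∀ n, 0 < m n) (hL : IsBaireScheme L) {p : X} {U : Set X} {n k : ℕ}
    (hk : blockStart m n ≤ k ∧ k < blockStart m (n + 1)) (hn : n ∈ (listTree L).rise p U) :
    k ∈ (listTree (regroup m L)).rise p U := by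
  obtain ⟨v, hv, hsh, hvn⟩ := hn
  rw [listTree_height, Nat.cast_inj] at hvn
  subst hvn
  obtain ⟨t, rfl, hdec, hp⟩ := exists_mem_regroup hm hL.eq_iUnion hv hk.1 hk.2
  exact ⟨t, hp, piRefines_shoot_regroup hm hL (hdec ▸ hsh), listTree_height t⟩

lemma growsInto_regroup (hm : ∀ n, 0 < m n) (hL : IsBaireScheme L)
    (hgrow : (listTree L).GrowsInto) : (listTree (regroup m L)).GrowsInto := by
  intro p U hU
  obtain ⟨v, hv, hsh⟩ := hgrow p U hU
  obtain ⟨t, -, hdec, hp⟩ := exists_mem_regroup hm hL.eq_iUnion hv le_rfl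
    (blockStart_strictMono hm v.length.lt_succ_self)
  exact ⟨t, hp, piRefines_shoot_regroup hm hL (hdec ▸ hsh)⟩

end BlockCode

open BlockCode in
/-- Lemma on rebuilding a π-tree along a strictly increasing function
(Lemma `lem.perestrojka` of the paper). -/
theorem exists_piTree_with_shifted_rise
    {X : Type u} [TopologicalSpace X] (F : FoliageTree X) (hF : F.IsPiTree)
    (α : ℕ → ℕ) (hα : StrictMono α) :
    ∃ H : FoliageTree X, H.IsPiTree ∧
      ∀ p : X, ∀ U ∈ nhds p, α '' F.rise p U ⊆ H.rise p U := by
  obtain ⟨hbaire, hgrow⟩ := hF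
  obtain ⟨e⟩ := hbaire.2.2.1
  let L : List ℕ → Set X := fun w => F.leaf (e.symm w)
  let e' : F.lt ≃r (listTree L).lt := e
  have hleaf : ∀ x, (listTree L).leaf (e' x) = F.leaf x := fun x => by simp [L, e']
  have hL : IsBaireScheme L := IsBaireScheme.of_isBaireFoliageTree e hbaire
  obtain ⟨m, hm, hmα⟩ := exists_blockStart_le_lt hα
  refine ⟨listTree (regroup m L), ⟨(hL.regroup hm).isBaireFoliageTree,
    growsInto_regroup hm hL (growsInto_of_relIso hleaf hgrow)⟩, ?_⟩
  rintro p U - _ ⟨n, hn, rfl⟩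
  exact rise_regroup hm hL (hmα n) (rise_subset_of_relIso hleaf p U hn)
end

section
/- The Sorgenfrey line R_S has a π-tree G such that cofin(ω) ≫ Rise_G(R_S). -/
open Set

universe u v

/-- The Sorgenfrey line: the reals with the topology generated by the
half-open intervals `[a, b)`. -/
def SorgLine : Type := ℝ

instance : TopologicalSpace SorgLine :=
  TopologicalSpace.generateFrom {s : Set ℝ | ∃ a b : ℝ, s = Set.Ico a b}

/-!
The tree is `ω^{<ω}` itself. The root leaf is `ℝ`, its sons are the intervals `[z, z + 1)`,
`z ∈ ℤ`, and the sons of a leaf `[a, b)` are the intervals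
`[b - (b - a) / 2 ^ k, b - (b - a) / 2 ^ (k + 1))`, `k ∈ ℕ`, which partition `[a, b)` and
accumulate at `b`. A leaf of height `n + 1` has length at most `2⁻ⁿ`, and right endpoints
decrease strictly along a branch, so each branch shrinks to a single point. Every cofinite union
of sons of `[a, b)` contains a final segment `[c, b)`; hence if `p` lies in a leaf of height
`n + 1` with `2⁻ⁿ < ε`, the shoot of that leaf π-refines every neighbourhood containing
`[p, p + ε)`, and `rise(p, U)` contains all large heights.
-/

open Filter Topology Function

section SeqTree

lemma seqLT_iff {a b : List ℕ} : seqLT a b ↔ a <+: b ∧ a.length < b.length :=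
  ⟨fun h => ⟨h.1, h.1.length_le.lt_of_ne fun hl => h.2 (h.1.eq_of_length hl)⟩,
    fun h => ⟨h.1, fun hab => h.2.ne (congrArg List.length hab)⟩⟩

lemma seqLT_trichotomous_iff {a b : List ℕ} :
    (seqLT a b ∨ a = b ∨ seqLT b a) ↔ (a <+: b ∨ b <+: a) := by
  constructor
  · rintro (h | rfl | h)
    exacts [Or.inl h.1, Or.inl (List.prefix_refl a), Or.inr h.1]
  · rintro (h | h) <;> obtain rfl | hab := eq_or_ne a b
    exacts [Or.inr (Or.inl rfl), Or.inl ⟨h, hab⟩, Or.inr (Or.inl rfl),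
      Or.inr (Or.inr ⟨h, hab.symm⟩)]

def seqLTPredIsoFin (v : List ℕ) :
    (fun x y : {b // seqLT b v} => seqLT x.1 y.1) ≃r
      ((· < ·) : Fin v.length → Fin v.length → Prop) where
  toFun x := ⟨x.1.length, (seqLT_iff.1 x.2).2⟩
  invFun i := ⟨v.take i, seqLT_iff.2 ⟨List.take_prefix _ _, by simp⟩⟩
  left_inv x := Subtype.ext (List.prefix_iff_eq_take.1 x.2.1).symm
  right_inv i := Fin.ext (by simp)
  map_rel_iff' {x y} := by
    refine ⟨fun h => seqLT_iff.2 ⟨List.prefix_of_prefix_length_le x.2.1 y.2.1 (le_of_lt h), h⟩,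
      fun h => (seqLT_iff.1 h).2⟩

instance (v : List ℕ) : IsWellOrder {b // seqLT b v} (fun x y => seqLT x.1 y.1) :=
  (seqLTPredIsoFin v).toRelEmbedding.isWellOrder

variable {X : Type u}

def seqTree (L : List ℕ → Set X) : FoliageTree X where
  Node := List ℕ
  lt := seqLT
  lt_irrefl _ h := h.2 rfl
  lt_trans hab hbc := seqLT_iff.2
    ⟨(seqLT_iff.1 hab).1.trans (seqLT_iff.1 hbc).1, (seqLT_iff.1 hab).2.trans (seqLT_iff.1 hbc).2⟩
  wellOrdered _ := inferInstance
  leaf := L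

variable (L : List ℕ → Set X)

lemma seqTree_height (v : List ℕ) : (seqTree L).height v = v.length :=
  (Ordinal.type_eq.2 ⟨seqLTPredIsoFin v⟩).trans (Ordinal.type_fin _)

lemma seqTree_isRoot : (seqTree L).IsRoot [] :=
  fun x => (eq_or_ne [] x).imp_right fun h => ⟨List.nil_prefix, h⟩

lemma seqTree_isOmegaOmegaTree : (seqTree L).IsOmegaOmegaTree := ⟨RelIso.refl _⟩

lemma seqTree_sons (v : List ℕ) : (seqTree L).Sons v = range (v ++ [·]) := by
  ext s
  simp only [FoliageTree.Sons, seqTree, seqLT_iff]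
  constructor
  · rintro ⟨⟨⟨t, rfl⟩, hlen⟩, hmin⟩
    obtain _ | ⟨k, t⟩ := t
    · simp at hlen
    refine ⟨k, ?_⟩
    obtain _ | ⟨j, t⟩ := t
    · rfl
    exact absurd ⟨v ++ [k], ⟨⟨[k], rfl⟩, by simp⟩, ⟨⟨j :: t, by simp⟩, by simp⟩⟩ hmin
  · rintro ⟨k, rfl⟩
    refine ⟨⟨⟨[k], rfl⟩, by simp⟩, ?_⟩
    rintro ⟨t, ⟨-, h₁⟩, -, h₂⟩
    simp only [List.length_append, List.length_singleton] at h₂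
    omega

lemma seqTree_locallyStrict (hcover : ∀ v, L v = ⋃ k, L (v ++ [k]))
    (hdisj : ∀ v, Pairwise (Disjoint on fun k => L (v ++ [k]))) : (seqTree L).LocallyStrict := by
  intro (v : List ℕ) _
  refine ⟨by rw [seqTree_sons, biUnion_range]; exact hcover v, ?_⟩
  simp only [seqTree_sons, forall_mem_range]
  intro i j hij
  exact hdisj v fun h => hij (by rw [h])

lemma seqTree_biUnion_mem_shoot (v : List ℕ) (m : ℕ) :
    (⋃ k ≥ m, L (v ++ [k])) ∈ (seqTree L).shoot v := by
  refine ⟨(v ++ [·]) '' Ici m, by rw [seqTree_sons]; exact image_subset_range _ _, ?_, ?_⟩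
  · refine ((finite_Iio m).image (v ++ [·])).subset ?_
    rintro s ⟨hs, hk⟩
    rw [seqTree_sons] at hs
    obtain ⟨k, rfl⟩ := hs
    exact ⟨k, mem_Iio.2 (not_le.1 fun h => hk ⟨k, h, rfl⟩), rfl⟩
  · rw [biUnion_image]
    rfl

variable {L} {B : Set (List ℕ)}

lemma seqTree_mem_branch_iff (hB : (seqTree L).IsBranch B) {u : List ℕ} :
    u ∈ B ↔ ∀ w ∈ B, u <+: w ∨ w <+: u := by
  refine ⟨fun hu w hw => seqLT_trichotomous_iff.1 (hB.1 u hu w hw), fun h => ?_⟩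
  have hchain : (seqTree L).IsChainN (insert u B) := by
    rintro x (rfl | hx) y (rfl | hy)
    · exact Or.inr (Or.inl rfl)
    · exact seqLT_trichotomous_iff.2 (h y hy)
    · exact seqLT_trichotomous_iff.2 (h x hx).symm
    · exact hB.1 x hx y hy
  rw [hB.2 _ hchain (subset_insert u B)]
  exact mem_insert u B

lemma seqTree_prefix_mem_branch (hB : (seqTree L).IsBranch B) {u v : List ℕ} (hv : v ∈ B)
    (huv : u <+: v) : u ∈ B := by
  refine (seqTree_mem_branch_iff hB).2 fun w hw => ?_
  rcases (seqTree_mem_branch_iff hB).1 hv w hw with hvw | hwv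
  · exact Or.inl (huv.trans hvw)
  · exact List.prefix_or_prefix_of_prefix huv hwv

lemma seqTree_exists_append_mem_branch (hB : (seqTree L).IsBranch B) {w : List ℕ} (hw : w ∈ B) :
    ∃ k, w ++ [k] ∈ B := by
  by_contra! h
  refine h 0 ((seqTree_mem_branch_iff hB).2 fun x hx => ?_)
  rcases (seqTree_mem_branch_iff hB).1 hw x hx with ⟨_ | ⟨k, t⟩, rfl⟩ | hxw
  · exact Or.inr (by simp)
  · exact absurd (seqTree_prefix_mem_branch hB hx ⟨t, by simp⟩) (h k)
  · exact Or.inr (hxw.trans (List.prefix_append _ _))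

lemma seqTree_eq_of_mem_branch (hB : (seqTree L).IsBranch B) {v w : List ℕ} (hv : v ∈ B)
    (hw : w ∈ B) (hlen : v.length = w.length) : v = w := by
  rcases (seqTree_mem_branch_iff hB).1 hv w hw with h | h
  exacts [h.eq_of_length hlen, (h.eq_of_length hlen.symm).symm]

lemma seqTree_exists_mem_branch_length (hB : (seqTree L).IsBranch B) (n : ℕ) :
    ∃ w ∈ B, w.length = n := by
  induction n with
  | zero => exact ⟨[], (seqTree_mem_branch_iff hB).2 fun w _ => Or.inl List.nil_prefix, rfl⟩
  | succ n ih =>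
    obtain ⟨w, hw, rfl⟩ := ih
    obtain ⟨k, hk⟩ := seqTree_exists_append_mem_branch hB hw
    exact ⟨w ++ [k], hk, by simp⟩

lemma seqTree_branch_eq_range (hB : (seqTree L).IsBranch B) :
    ∃ s : ℕ → ℕ, B = range fun n => (List.range n).map s := by
  choose f hfB hflen using seqTree_exists_mem_branch_length hB
  have hstep : ∀ n, ∃ k, f (n + 1) = f n ++ [k] := by
    intro n
    obtain ⟨k, hk⟩ := seqTree_exists_append_mem_branch hB (hfB n)
    exact ⟨k, seqTree_eq_of_mem_branch hB (hfB _) hk (by simp [hflen])⟩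
  choose s hs using hstep
  have hf : ∀ n, f n = (List.range n).map s := by
    intro n
    induction n with
    | zero => exact List.length_eq_zero_iff.1 (hflen 0)
    | succ n ih => rw [hs, ih, List.range_succ, List.map_append]; rfl
  refine ⟨s, ?_⟩
  rw [← funext hf]
  refine Set.ext fun w => ⟨fun hw => ⟨w.length, ?_⟩, ?_⟩
  · exact seqTree_eq_of_mem_branch hB (hfB _) hw (hflen _)
  · rintro ⟨n, rfl⟩
    exact hfB n

variable (L) in
lemma seqTree_strictBranches (h : ∀ s : ℕ → ℕ, ∃ p, ⋂ n, L ((List.range n).map s) = {p}) :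
    (seqTree L).StrictBranches := by
  refine ⟨⟨([] : List ℕ)⟩, fun B hB => ?_⟩
  obtain ⟨s, rfl⟩ := seqTree_branch_eq_range hB
  show ∃ p, ⋂ v ∈ range _, L v = {p}
  rw [biInter_range]
  exact h s

end SeqTree

lemma FoliageTree.growsInto_of_rise_nonempty {X : Type u} [TopologicalSpace X] {F : FoliageTree X}
    (h : ∀ p : X, ∀ U ∈ 𝓝 p, (F.rise p U).Nonempty) : F.GrowsInto := fun p U hU =>
  let ⟨_, v, hv, hvU, _⟩ := h p U hU
  ⟨v, hv, hvU⟩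

lemma piRefines_cofin_univ {𝓡 : Set (Set ℕ)} (h : ∀ R ∈ 𝓡, ∃ N, Ici N ⊆ R) :
    PiRefines (cofin univ) 𝓡 := by
  intro R hR _
  obtain ⟨N, hN⟩ := h R hR
  exact ⟨Ici N, ⟨Iio N, finite_Iio N, subset_univ _, by ext; simp⟩, nonempty_Ici, hN⟩

-- `SorgLine` carries no order or arithmetic; real-number notation reaches its points through this.
def SorgLine.toReal (p : SorgLine) : ℝ := p

lemma sorgenfrey_isTopologicalBasis :
    TopologicalSpace.IsTopologicalBasis {s : Set SorgLine | ∃ a b : ℝ, s = (Ico a b : Set ℝ)} where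
  exists_subset_inter := by
    rintro _ ⟨a, b, rfl⟩ _ ⟨c, d, rfl⟩ x hx
    have h : Ico a b ∩ Ico c d = Ico (a ⊔ c) (b ⊓ d) := Ico_inter_Ico
    exact ⟨(Ico (a ⊔ c) (b ⊓ d) : Set ℝ), ⟨_, _, rfl⟩, h ▸ hx, h.ge⟩
  sUnion_eq := eq_univ_of_forall fun x => ⟨(Ico x.toReal (x.toReal + 1) : Set ℝ), ⟨_, _, rfl⟩,
    (left_mem_Ico (a := x.toReal)).2 (lt_add_one _)⟩
  eq_generateFrom := rfl

lemma sorgenfrey_isOpen_Ico (a b : ℝ) : IsOpen (X := SorgLine) (Ico a b : Set ℝ) :=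
  sorgenfrey_isTopologicalBasis.isOpen ⟨a, b, rfl⟩

lemma sorgenfrey_exists_Ico_subset {p : SorgLine} {U : Set SorgLine} (hU : U ∈ 𝓝 p) :
    ∃ ε > 0, Ico p.toReal (p.toReal + ε) ⊆ U := by
  obtain ⟨_, ⟨a, b, rfl⟩, hp, hU⟩ := sorgenfrey_isTopologicalBasis.mem_nhds_iff.1 hU
  exact ⟨b - p.toReal, sub_pos.2 hp.2, fun x hx => hU ⟨hp.1.trans hx.1, by simpa using hx.2⟩⟩

section Intervals

noncomputable def approach (I : ℝ × ℝ) (k : ℕ) : ℝ := I.2 - (I.2 - I.1) / 2 ^ k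

noncomputable def child (I : ℝ × ℝ) (k : ℕ) : ℝ × ℝ := (approach I k, approach I (k + 1))

variable {I : ℝ × ℝ}

lemma approach_zero : approach I 0 = I.1 := by simp [approach]

lemma approach_strictMono (hI : I.1 < I.2) : StrictMono (approach I) := by
  refine strictMono_nat_of_lt_succ fun k => ?_
  have : (I.2 - I.1) / 2 ^ (k + 1) < (I.2 - I.1) / 2 ^ k :=
    div_lt_div_of_pos_left (sub_pos.2 hI) (by positivity)
      (pow_lt_pow_right₀ one_lt_two k.lt_succ_self)
  unfold approach
  linarith

lemma approach_lt (hI : I.1 < I.2) (k : ℕ) : approach I k < I.2 := by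
  have : 0 < (I.2 - I.1) / 2 ^ k := div_pos (sub_pos.2 hI) (by positivity)
  unfold approach
  linarith

lemma child_fst_lt_snd (hI : I.1 < I.2) (k : ℕ) : (child I k).1 < (child I k).2 :=
  approach_strictMono hI k.lt_succ_self

lemma le_child_fst (hI : I.1 < I.2) (k : ℕ) : I.1 ≤ (child I k).1 :=
  approach_zero (I := I) ▸ (approach_strictMono hI).monotone k.zero_le

lemma child_snd_lt (hI : I.1 < I.2) (k : ℕ) : (child I k).2 < I.2 := approach_lt hI (k + 1)

lemma child_snd_sub_fst (k : ℕ) : (child I k).2 - (child I k).1 = (I.2 - I.1) / 2 ^ (k + 1) := by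
  simp only [child, approach]
  field_simp
  ring

lemma iUnion_Ico_child (hI : I.1 < I.2) : ⋃ k, Ico (child I k).1 (child I k).2 = Ico I.1 I.2 := by
  ext x
  simp only [mem_iUnion, mem_Ico]
  constructor
  · rintro ⟨k, h₁, h₂⟩
    exact ⟨(le_child_fst hI k).trans h₁, h₂.trans (child_snd_lt hI k)⟩
  · rintro ⟨h₁, h₂⟩
    have hx : 0 < I.2 - x := sub_pos.2 h₂
    obtain ⟨k, hk₁, hk₂⟩ := exists_nat_pow_near (x := (I.2 - I.1) / (I.2 - x)) (y := (2 : ℝ))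
      ((one_le_div hx).2 (by linarith)) one_lt_two
    rw [le_div_iff₀ hx] at hk₁
    rw [div_lt_iff₀ hx] at hk₂
    refine ⟨k, ?_, ?_⟩
    · have : I.2 - x ≤ (I.2 - I.1) / 2 ^ k := by rw [le_div_iff₀ (by positivity)]; linarith
      simp only [child, approach]
      linarith
    · have : (I.2 - I.1) / 2 ^ (k + 1) < I.2 - x := by rw [div_lt_iff₀ (by positivity)]; linarith
      simp only [child, approach]
      linarith

lemma pairwise_disjoint_Ico_child (hI : I.1 < I.2) :
    Pairwise (Disjoint on fun k => Ico (child I k).1 (child I k).2) :=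
  (approach_strictMono hI).monotone.pairwise_disjoint_on_Ico_succ

lemma biUnion_Ico_child_subset (hI : I.1 < I.2) (m : ℕ) :
    ⋃ k ≥ m, Ico (child I k).1 (child I k).2 ⊆ Ico (approach I m) I.2 :=
  iUnion₂_subset fun _ hk =>
    Ico_subset_Ico ((approach_strictMono hI).monotone hk) (child_snd_lt hI _).le

lemma foldl_child_fst_lt_snd (hI : I.1 < I.2) (l : List ℕ) :
    (l.foldl child I).1 < (l.foldl child I).2 := by
  induction l generalizing I with
  | nil => exact hI
  | cons k l ih => exact ih (child_fst_lt_snd hI k)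

lemma foldl_child_length_le (hI : I.1 < I.2) (l : List ℕ) :
    (l.foldl child I).2 - (l.foldl child I).1 ≤ (I.2 - I.1) / 2 ^ l.length := by
  induction l generalizing I with
  | nil => simp
  | cons k l ih =>
    refine (ih (child_fst_lt_snd hI k)).trans ?_
    rw [child_snd_sub_fst, div_div, List.length_cons]
    have : (0 : ℝ) ≤ I.2 - I.1 := (sub_pos.2 hI).le
    gcongr
    rw [pow_succ, mul_comm]
    gcongr
    exact le_self_pow₀ one_le_two k.succ_ne_zero

lemma iInter_Ico_eq_singleton {a b : ℕ → ℝ} (ha : Monotone a) (hb : StrictAnti b)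
    (hab : ∀ n, a n ≤ b n) (hlen : Tendsto (fun n => b n - a n) atTop (𝓝 0)) :
    ⋂ n, Ico (a n) (b n) = {⨆ n, a n} := by
  have hmem := mem_iInter.1 (ha.ciSup_mem_iInter_Icc_of_antitone hb.antitone hab)
  ext x
  simp only [mem_iInter, mem_singleton_iff]
  constructor
  · intro hx
    have : |x - ⨆ n, a n| ≤ 0 := ge_of_tendsto' hlen fun n => abs_sub_le_iff.2
      ⟨by linarith [(hx n).2, (hmem n).1], by linarith [(hx n).1, (hmem n).2]⟩
    exact sub_eq_zero.1 (abs_nonpos_iff.1 this)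
  · rintro rfl n
    exact ⟨(hmem n).1, (hmem (n + 1)).2.trans_lt (hb n.lt_succ_self)⟩

end Intervals

noncomputable def unitIco (k : ℕ) : ℝ × ℝ :=
  ((Equiv.intEquivNat.symm k : ℤ), (Equiv.intEquivNat.symm k : ℤ) + 1)

noncomputable def nodeIco (k : ℕ) (l : List ℕ) : ℝ × ℝ := l.foldl child (unitIco k)

noncomputable def sorgLeaf : List ℕ → Set ℝ
  | [] => univ
  | k :: l => Ico (nodeIco k l).1 (nodeIco k l).2

lemma mem_Ico_unitIco_iff {x : ℝ} {k : ℕ} :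
    x ∈ Ico (unitIco k).1 (unitIco k).2 ↔ Equiv.intEquivNat ⌊x⌋ = k := by
  rw [← Equiv.eq_symm_apply, Int.floor_eq_iff]
  rfl

lemma nodeIco_fst_lt_snd (k : ℕ) (l : List ℕ) : (nodeIco k l).1 < (nodeIco k l).2 :=
  foldl_child_fst_lt_snd (by simp [unitIco]) l

lemma nodeIco_append (k : ℕ) (l : List ℕ) (j : ℕ) :
    nodeIco k (l ++ [j]) = child (nodeIco k l) j := by
  simp [nodeIco]

lemma nodeIco_length_le (k : ℕ) (l : List ℕ) :
    (nodeIco k l).2 - (nodeIco k l).1 ≤ 1 / 2 ^ l.length := by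
  have h := foldl_child_length_le (I := unitIco k) (by simp [unitIco]) l
  rwa [show (unitIco k).2 - (unitIco k).1 = 1 by simp [unitIco]] at h

lemma sorgLeaf_cons_append (k : ℕ) (l : List ℕ) (j : ℕ) :
    sorgLeaf (k :: l ++ [j]) = Ico (child (nodeIco k l) j).1 (child (nodeIco k l) j).2 := by
  rw [List.cons_append, sorgLeaf, nodeIco_append]

lemma sorgLeaf_eq_iUnion (v : List ℕ) : sorgLeaf v = ⋃ k, sorgLeaf (v ++ [k]) := by
  cases v with
  | nil =>
    exact (eq_univ_of_forall fun x =>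
      mem_iUnion.2 ⟨Equiv.intEquivNat ⌊x⌋, mem_Ico_unitIco_iff.2 rfl⟩).symm
  | cons k l =>
    simp only [sorgLeaf_cons_append]
    exact (iUnion_Ico_child (nodeIco_fst_lt_snd k l)).symm

lemma sorgLeaf_pairwise_disjoint (v : List ℕ) :
    Pairwise (Disjoint on fun k => sorgLeaf (v ++ [k])) := by
  cases v with
  | nil =>
    exact fun i j hij => disjoint_left.2 fun x hi hj =>
      hij ((mem_Ico_unitIco_iff.1 hi).symm.trans (mem_Ico_unitIco_iff.1 hj))
  | cons k l =>
    simp only [sorgLeaf_cons_append]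
    exact pairwise_disjoint_Ico_child (nodeIco_fst_lt_snd k l)

lemma sorgLeaf_nonempty (v : List ℕ) : (sorgLeaf v).Nonempty := by
  cases v with
  | nil => exact univ_nonempty
  | cons k l => exact nonempty_Ico.2 (nodeIco_fst_lt_snd k l)

lemma sorgLeaf_isOpen (v : List ℕ) : IsOpen (X := SorgLine) (sorgLeaf v) := by
  cases v with
  | nil => exact isOpen_univ
  | cons k l => exact sorgenfrey_isOpen_Ico _ _

lemma sorgLeaf_strictBranches (s : ℕ → ℕ) : ∃ p, ⋂ n, sorgLeaf ((List.range n).map s) = {p} := by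
  set I : ℕ → ℝ × ℝ := fun n => nodeIco (s 0) ((List.range n).map fun i => s (i + 1))
  have hleaf : ∀ n, sorgLeaf ((List.range (n + 1)).map s) = Ico (I n).1 (I n).2 := by
    intro n
    rw [List.range_succ_eq_map, List.map_cons, List.map_map]
    rfl
  have hstep : ∀ n, I (n + 1) = child (I n) (s (n + 1)) := by
    intro n
    simp only [I, List.range_succ, List.map_append, List.map_cons, List.map_nil, nodeIco_append]
  have hI : ∀ n, (I n).1 < (I n).2 := fun n => nodeIco_fst_lt_snd _ _
  have hlen : Tendsto (fun n => (I n).2 - (I n).1) atTop (𝓝 0) := by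
    refine squeeze_zero (fun n => (sub_pos.2 (hI n)).le) (fun n => ?_)
      (tendsto_pow_atTop_nhds_zero_of_lt_one one_half_pos.le one_half_lt_one)
    simpa using nodeIco_length_le (s 0) ((List.range n).map fun i => s (i + 1))
  have hInter : ⋂ n, sorgLeaf ((List.range n).map s) = ⋂ n, Ico (I n).1 (I n).2 := by
    ext x
    simp only [mem_iInter]
    refine ⟨fun h n => hleaf n ▸ h (n + 1), fun h n => ?_⟩
    cases n with
    | zero => trivial
    | succ n => exact hleaf n ▸ h n
  rw [hInter]
  exact ⟨_, iInter_Ico_eq_singleton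
    (monotone_nat_of_le_succ fun n => hstep n ▸ le_child_fst (hI n) _)
    (strictAnti_nat_of_succ_lt fun n => hstep n ▸ child_snd_lt (hI n) _)
    (fun n => (hI n).le) hlen⟩

lemma exists_length_eq_mem_sorgLeaf (x : ℝ) (n : ℕ) :
    ∃ v : List ℕ, v.length = n ∧ x ∈ sorgLeaf v := by
  induction n with
  | zero => exact ⟨[], rfl, trivial⟩
  | succ n ih =>
    obtain ⟨v, rfl, hv⟩ := ih
    rw [sorgLeaf_eq_iUnion, mem_iUnion] at hv
    obtain ⟨k, hk⟩ := hv
    exact ⟨v ++ [k], by simp, hk⟩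

noncomputable abbrev sorgTree : FoliageTree SorgLine := seqTree sorgLeaf

lemma sorgTree_isBaireFoliageTree : sorgTree.IsBaireFoliageTree :=
  ⟨sorgLeaf_isOpen, seqTree_locallyStrict _ sorgLeaf_eq_iUnion sorgLeaf_pairwise_disjoint,
    seqTree_isOmegaOmegaTree _, seqTree_strictBranches _ sorgLeaf_strictBranches,
    [], seqTree_isRoot _, rfl⟩

lemma sorgTree_shoot_piRefines {k : ℕ} {l : List ℕ} {p : SorgLine} {U : Set SorgLine}
    (hp : p.toReal ∈ sorgLeaf (k :: l)) (hU : Ico p.toReal (nodeIco k l).2 ⊆ U) :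
    PiRefines (sorgTree.shoot (k :: l)) {U} := by
  rintro _ rfl -
  have hI := nodeIco_fst_lt_snd k l
  have hp' : p.toReal ∈ Ico (nodeIco k l).1 (nodeIco k l).2 := hp
  rw [← iUnion_Ico_child hI, mem_iUnion] at hp'
  obtain ⟨m, hm⟩ := hp'
  -- `p` lies in the `m`-th son, so the sons from the `(m + 1)`-st on lie to the right of `p`.
  refine ⟨_, seqTree_biUnion_mem_shoot sorgLeaf (k :: l) (m + 1), ?_, ?_⟩
  · exact (sorgLeaf_nonempty _).mono
      (subset_biUnion_of_mem (u := fun j => sorgLeaf (k :: l ++ [j])) (le_refl (m + 1)))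
  · simp only [sorgLeaf_cons_append]
    exact (biUnion_Ico_child_subset hI (m + 1)).trans
      ((Ico_subset_Ico_left hm.2.le).trans hU)

lemma Ici_subset_sorgTree_rise {p : SorgLine} {U : Set SorgLine} (hU : U ∈ 𝓝 p) :
    ∃ N, Ici N ⊆ sorgTree.rise p U := by
  obtain ⟨ε, hε, hεU⟩ := sorgenfrey_exists_Ico_subset hU
  obtain ⟨N, hN⟩ := exists_pow_lt_of_lt_one hε one_half_lt_one
  refine ⟨N + 1, fun n hn => ?_⟩
  obtain ⟨_ | ⟨k, l⟩, hlen, hp⟩ := exists_length_eq_mem_sorgLeaf p.toReal n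
  · simp only [List.length_nil, mem_Ici] at hlen hn
    omega
  refine ⟨k :: l, hp, sorgTree_shoot_piRefines hp ((Ico_subset_Ico_right ?_).trans hεU), ?_⟩
  · have hl : N ≤ l.length := by simp only [List.length_cons, mem_Ici] at hlen hn; omega
    have := nodeIco_length_le k l
    have : (1 : ℝ) / 2 ^ l.length ≤ (1 / 2) ^ N := by
      rw [← one_div_pow]
      exact pow_le_pow_of_le_one (by norm_num) (by norm_num) hl
    linarith [hp.1]
  · exact (seqTree_height _ _).trans (congrArg _ hlen)

lemma sorgTree_growsInto : sorgTree.GrowsInto :=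
  FoliageTree.growsInto_of_rise_nonempty fun _ _ hU =>
    let ⟨N, hN⟩ := Ici_subset_sorgTree_rise hU
    ⟨N, hN (mem_Ici.2 le_rfl)⟩

/-- The Sorgenfrey line has a π-tree whose Rise family is π-refined by the
cofinite subsets of `ω`. -/
theorem sorgenfrey_has_piTree_with_cofinite_rise :
    ∃ G : FoliageTree SorgLine, G.IsPiTree ∧ PiRefines (cofin Set.univ) G.Rise := by
  refine ⟨sorgTree, ⟨sorgTree_isBaireFoliageTree, sorgTree_growsInto⟩, piRefines_cofin_univ ?_⟩
  rintro _ ⟨p, U, hU, rfl⟩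
  exact Ici_subset_sorgTree_rise hU
end
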